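/- arXiv:2108.09413 — 3 statements merged into one kernel-verified Lean document; each statement's English description precedes it below -/
import Mathlib

section
/- Discrete Neyman-Pearson lemma, part 1: Let Z be a countable type, let p_X, p_Y : Z → ℝ be probability mass functions (nonnegative, summable, each summing to 1), and let φ : Z → ℝ be a (possibly randomized) test with 0 ≤ φ(z) ≤ 1 for all z. Suppose S = {z ∈ Z : p_Y(z) ≤ α · p_X(z)} for some real α > 0. If ∑_{z∈Z} φ(z)·p_X(z) ≥ ∑_{z∈S} p_X(z), then ∑_{z∈Z} φ(z)·p_Y(z) ≥ ∑_{z∈S} p_Y(z). -/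
open scoped BigOperators

/-- Discrete Neyman-Pearson lemma, part 1. -/
theorem discrete_neyman_pearson_part1 {Z : Type*} [Countable Z]
    (pX pY : Z → ℝ)
    (hXnn : ∀ z, 0 ≤ pX z) (hXsum : Summable pX) (hXone : ∑' z, pX z = 1)
    (hYnn : ∀ z, 0 ≤ pY z) (hYsum : Summable pY) (hYone : ∑' z, pY z = 1)
    (φ : Z → ℝ) (hφ0 : ∀ z, 0 ≤ φ z) (hφ1 : ∀ z, φ z ≤ 1)
    (α : ℝ) (hα : 0 < α) (S : Set Z) (hS : S = {z | pY z ≤ α * pX z})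
    (h : ∑' z, φ z * pX z ≥ ∑' z : S, pX z) :
    ∑' z, φ z * pY z ≥ ∑' z : S, pY z := by
  classical
  have hφX : Summable (fun z => φ z * pX z) := by
    refine Summable.of_nonneg_of_le (fun z => mul_nonneg (hφ0 z) (hXnn z))
      (fun z => ?_) hXsum
    calc φ z * pX z ≤ 1 * pX z := mul_le_mul_of_nonneg_right (hφ1 z) (hXnn z)
      _ = pX z := one_mul _
  have hφY : Summable (fun z => φ z * pY z) := by
    refine Summable.of_nonneg_of_le (fun z => mul_nonneg (hφ0 z) (hYnn z))
      (fun z => ?_) hYsum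
    calc φ z * pY z ≤ 1 * pY z := mul_le_mul_of_nonneg_right (hφ1 z) (hYnn z)
      _ = pY z := one_mul _
  have hIX : Summable (S.indicator pX) := hXsum.indicator S
  have hIY : Summable (S.indicator pY) := hYsum.indicator S
  set g : Z → ℝ := fun z =>
    (φ z * pY z - S.indicator pY z) - α * (φ z * pX z - S.indicator pX z) with hg
  have hgnn : ∀ z, 0 ≤ g z := by
    intro z
    by_cases hz : z ∈ S
    · have hmem : pY z ≤ α * pX z := by rw [hS] at hz; exact hz
      have : g z = (φ z - 1) * (pY z - α * pX z) := by
        simp [hg, Set.indicator_of_mem hz]; ring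
      rw [this]
      nlinarith [hφ1 z]
    · have hmem : α * pX z < pY z := by
        rw [hS] at hz; exact lt_of_not_ge hz
      have : g z = φ z * (pY z - α * pX z) := by
        simp [hg, Set.indicator_of_notMem hz]; ring
      rw [this]
      exact mul_nonneg (hφ0 z) (by linarith)
  have hsum1 : Summable (fun z => φ z * pY z - S.indicator pY z) := hφY.sub hIY
  have hsum2 : Summable (fun z => φ z * pX z - S.indicator pX z) := hφX.sub hIX
  have htsum : ∑' z, g z =
      (∑' z, φ z * pY z - ∑' z, S.indicator pY z) -
        α * (∑' z, φ z * pX z - ∑' z, S.indicator pX z) := by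
    rw [hg]
    rw [Summable.tsum_sub hsum1 (hsum2.mul_left α), tsum_mul_left,
      Summable.tsum_sub hφY hIY, Summable.tsum_sub hφX hIX]
  have hge : 0 ≤ ∑' z, g z := tsum_nonneg hgnn
  have hsubX : ∑' z : S, pX z = ∑' z, S.indicator pX z := tsum_subtype S pX
  have hsubY : ∑' z : S, pY z = ∑' z, S.indicator pY z := tsum_subtype S pY
  have hX' : 0 ≤ ∑' z, φ z * pX z - ∑' z, S.indicator pX z := by
    rw [← hsubX]; linarith [h]
  rw [htsum] at hge
  have : 0 ≤ α * (∑' z, φ z * pX z - ∑' z, S.indicator pX z) :=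
    mul_nonneg hα.le hX'
  rw [hsubY]
  linarith
end

section
/- Discrete Neyman-Pearson lemma, part 2: Let Z be a countable type, let p_X, p_Y : Z → ℝ be probability mass functions (nonnegative, summable, each summing to 1), and let φ : Z → ℝ be a (possibly randomized) test with 0 ≤ φ(z) ≤ 1 for all z. Suppose S = {z ∈ Z : p_Y(z) ≥ α · p_X(z)} for some real α > 0. If ∑_{z∈Z} φ(z)·p_X(z) ≤ ∑_{z∈S} p_X(z), then ∑_{z∈Z} φ(z)·p_Y(z) ≤ ∑_{z∈S} p_Y(z). -/
open scoped BigOperators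

/-- Discrete Neyman-Pearson lemma, part 2. -/
theorem discrete_neyman_pearson_part2 {Z : Type*} [Countable Z]
    (pX pY : Z → ℝ)
    (hXnn : ∀ z, 0 ≤ pX z) (hXsum : Summable pX) (hXone : ∑' z, pX z = 1)
    (hYnn : ∀ z, 0 ≤ pY z) (hYsum : Summable pY) (hYone : ∑' z, pY z = 1)
    (φ : Z → ℝ) (hφ0 : ∀ z, 0 ≤ φ z) (hφ1 : ∀ z, φ z ≤ 1)
    (α : ℝ) (hα : 0 < α) (S : Set Z) (hS : S = {z | pY z ≥ α * pX z})
    (h : ∑' z, φ z * pX z ≤ ∑' z : S, pX z) :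
    ∑' z, φ z * pY z ≤ ∑' z : S, pY z := by
  classical
  set ψ : Z → ℝ := fun z => if z ∈ S then 1 else 0 with hψdef
  have hψ0 : ∀ z, 0 ≤ ψ z := fun z => by by_cases hz : z ∈ S <;> simp [hψdef, hz]
  have hψ1 : ∀ z, ψ z ≤ 1 := fun z => by by_cases hz : z ∈ S <;> simp [hψdef, hz]
  have hψX : Summable (fun z => ψ z * pX z) :=
    Summable.of_nonneg_of_le (fun z => mul_nonneg (hψ0 z) (hXnn z))
      (fun z => by nlinarith [hψ1 z, hXnn z, hψ0 z]) hXsum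
  have hψY : Summable (fun z => ψ z * pY z) :=
    Summable.of_nonneg_of_le (fun z => mul_nonneg (hψ0 z) (hYnn z))
      (fun z => by nlinarith [hψ1 z, hYnn z, hψ0 z]) hYsum
  have hφX : Summable (fun z => φ z * pX z) :=
    Summable.of_nonneg_of_le (fun z => mul_nonneg (hφ0 z) (hXnn z))
      (fun z => by nlinarith [hφ1 z, hXnn z, hφ0 z]) hXsum
  have hφY : Summable (fun z => φ z * pY z) :=
    Summable.of_nonneg_of_le (fun z => mul_nonneg (hφ0 z) (hYnn z))
      (fun z => by nlinarith [hφ1 z, hYnn z, hφ0 z]) hYsum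
  -- express subtype sums via ψ
  have hSX : (∑' z : S, pX z) = ∑' z, ψ z * pX z := by
    rw [tsum_subtype]
    congr 1; funext z
    by_cases hz : z ∈ S <;> simp [Set.indicator, hψdef, hz]
  have hSY : (∑' z : S, pY z) = ∑' z, ψ z * pY z := by
    rw [tsum_subtype]
    congr 1; funext z
    by_cases hz : z ∈ S <;> simp [Set.indicator, hψdef, hz]
  -- pointwise nonnegativity of the key product
  have hg : ∀ z, 0 ≤ (ψ z - φ z) * (pY z - α * pX z) := by
    intro z
    by_cases hz : z ∈ S
    · have h1 : pY z ≥ α * pX z := by rw [hS] at hz; exact hz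
      have h2 : ψ z = 1 := by simp [hψdef, hz]
      nlinarith [hφ1 z]
    · have h1 : ¬ pY z ≥ α * pX z := by rw [hS] at hz; exact hz
      have h2 : ψ z = 0 := by simp [hψdef, hz]
      nlinarith [hφ0 z]
  have key : 0 ≤ ∑' z, (ψ z - φ z) * (pY z - α * pX z) := tsum_nonneg hg
  have expand : (∑' z, (ψ z - φ z) * (pY z - α * pX z))
      = ((∑' z, ψ z * pY z) - ∑' z, φ z * pY z)
        - α * ((∑' z, ψ z * pX z) - ∑' z, φ z * pX z) := by
    have e : (fun z => (ψ z - φ z) * (pY z - α * pX z))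
        = fun z => (ψ z * pY z - φ z * pY z) - α * (ψ z * pX z - φ z * pX z) := by
      funext z; ring
    rw [e, Summable.tsum_sub ((hψY.sub hφY)) (((hψX.sub hφX)).mul_left α),
      Summable.tsum_sub hψY hφY, tsum_mul_left, Summable.tsum_sub hψX hφX]
  rw [hSX] at h
  rw [hSY]
  rw [expand] at key
  nlinarith [key, h, hα]
end

section
/- Neyman-Pearson for discrete Gaussians with different means, part 1: fix σ > 0, d ∈ ℕ, x, δ ∈ ℤ^d. Let p_X, p_Y be the pmfs on ℤ^d of the product discrete Gaussians centered at x and x+δ respectively, and let φ : ℤ^d → ℝ be a (possibly randomized) test with 0 ≤ φ(z) ≤ 1 for all z. Suppose S = {z ∈ ℤ^d : ⟨z,δ⟩ ≤ σ²·ln α + ½(‖δ‖₂² + 2⟨x,δ⟩)} for some real α > 0. If ∑_{z∈ℤ^d} φ(z)·p_X(z) ≥ ∑_{z∈S} p_X(z), then ∑_{z∈ℤ^d} φ(z)·p_Y(z) ≥ ∑_{z∈S} p_Y(z). -/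
/-!
The likelihood ratio `p_{x+δ}(z) / p_x(z)` equals `exp ((2⟨z,δ⟩ - 2⟨x,δ⟩ - ‖δ‖²) / (2σ²))`, the
normalising constants cancelling because they are invariant under integer shifts. Hence `S` is
exactly the region where this ratio is at most `α`, and the classical Neyman–Pearson argument
applies: `(φ - 1_S) (p_{x+δ} - α p_x) ≥ 0` pointwise, and summing over `ℤ^d` gives the claim.
-/

open scoped BigOperators

/-- Discrete Gaussian pmf on ℤ with location `μ` and scale `σ`. -/
noncomputable def dgauss (σ : ℝ) (μ : ℤ) (z : ℤ) : ℝ :=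
  Real.exp (-((z : ℝ) - (μ : ℝ)) ^ 2 / (2 * σ ^ 2)) /
    ∑' h : ℤ, Real.exp (-((h : ℝ) - (μ : ℝ)) ^ 2 / (2 * σ ^ 2))

/-- Product discrete Gaussian pmf on `ℤ^d` centered at `x`. -/
noncomputable def dgaussProd (σ : ℝ) (d : ℕ) (x z : Fin d → ℤ) : ℝ :=
  ∏ i, dgauss σ (x i) (z i)

/-- Standard inner product on `ℝ^d` of (casts of) integer vectors. -/
noncomputable def iprod (d : ℕ) (a b : Fin d → ℤ) : ℝ :=
  ∑ i, (a i : ℝ) * (b i : ℝ)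

/-- Squared ℓ₂ norm of (the cast of) an integer vector. -/
noncomputable def nsq (d : ℕ) (a : Fin d → ℤ) : ℝ :=
  ∑ i, ((a i : ℝ)) ^ 2

open Real

theorem neyman_pearson_of_likelihood_ratio {ι : Type*} {p q φ : ι → ℝ} {S : Set ι} {α : ℝ}
    (hα : 0 ≤ α) (hp : Summable p) (hq : Summable q) (hφ0 : ∀ z, 0 ≤ φ z) (hφ1 : ∀ z, φ z ≤ 1)
    (hS : ∀ z ∈ S, q z ≤ α * p z) (hSc : ∀ z ∉ S, α * p z ≤ q z)
    (h : ∑' z : S, p z ≤ ∑' z, φ z * p z) :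
    ∑' z : S, q z ≤ ∑' z, φ z * q z := by
  have hφ : ∀ {f : ι → ℝ}, Summable f → Summable fun z => φ z * f z := fun hf =>
    hf.abs.of_norm_bounded fun z => by
      rw [Real.norm_eq_abs, abs_mul, abs_of_nonneg (hφ0 z)]
      exact mul_le_of_le_one_left (abs_nonneg _) (hφ1 z)
  -- `(φ - 1_S) (q - α p) ≥ 0` pointwise, by the choice of `S`.
  have hpos : ∀ z, 0 ≤ (φ z * q z - S.indicator q z) - α * (φ z * p z - S.indicator p z) := by
    intro z
    by_cases hz : z ∈ S
    · simp only [Set.indicator_of_mem hz]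
      nlinarith [hS z hz, hφ1 z]
    · simp only [Set.indicator_of_notMem hz]
      nlinarith [hSc z hz, hφ0 z]
  have hsum := ((((hφ hq).hasSum.sub (hq.indicator S).hasSum).sub
    (((hφ hp).hasSum.sub (hp.indicator S).hasSum).mul_left α))).nonneg hpos
  rw [tsum_subtype] at h ⊢
  nlinarith

theorem summable_pi_prod {ι κ : Type*} [Fintype ι] (f : ι → κ → ℝ)
    (hf0 : ∀ i k, 0 ≤ f i k) (hf : ∀ i, Summable (f i)) :
    Summable fun z : ι → κ => ∏ i, f i (z i) := by
  classical
  refine summable_of_sum_le (c := ∏ i, ∑' k, f i k)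
    (fun z => Finset.prod_nonneg fun i _ => hf0 i _) fun F => ?_
  calc ∑ z ∈ F, ∏ i, f i (z i)
      ≤ ∑ z ∈ Fintype.piFinset fun i => F.image (· i), ∏ i, f i (z i) :=
        Finset.sum_le_sum_of_subset_of_nonneg
          (fun z hz => Fintype.mem_piFinset.2 fun i => Finset.mem_image_of_mem _ hz)
          fun z _ _ => Finset.prod_nonneg fun i _ => hf0 i _
    _ = ∏ i, ∑ k ∈ F.image (· i), f i k := (Finset.prod_univ_sum _ _).symm
    _ ≤ ∏ i, ∑' k, f i k :=
        Finset.prod_le_prod (fun i _ => Finset.sum_nonneg fun k _ => hf0 i k)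
          fun i _ => (hf i).sum_le_tsum _ fun k _ => hf0 i k

theorem summable_exp_neg_sq_div {σ : ℝ} (hσ : σ ≠ 0) (μ : ℝ) :
    Summable fun h : ℤ => exp (-((h : ℝ) - μ) ^ 2 / (2 * σ ^ 2)) := by
  refine (HurwitzKernelBounds.summable_f_int 0 (-μ)
    (t := 1 / (2 * π * σ ^ 2)) (by positivity)).congr fun h => ?_
  rw [HurwitzKernelBounds.f_int, pow_zero, one_mul]
  congr 1
  field_simp
  ring

theorem tsum_comp_intCast_sub {M : Type*} [AddCommMonoid M] [TopologicalSpace M]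
    (f : ℝ → M) (μ : ℤ) : ∑' h : ℤ, f (h - μ) = ∑' h : ℤ, f h := by
  simpa using (Equiv.subRight μ).tsum_eq fun h : ℤ => f h

theorem dgauss_nonneg (σ : ℝ) (μ z : ℤ) : 0 ≤ dgauss σ μ z :=
  div_nonneg (exp_pos _).le (tsum_nonneg fun _ => (exp_pos _).le)

theorem summable_dgauss {σ : ℝ} (hσ : σ ≠ 0) (μ : ℤ) : Summable (dgauss σ μ) :=
  (summable_exp_neg_sq_div hσ μ).div_const _

theorem dgauss_add (σ : ℝ) (μ δ z : ℤ) :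
    dgauss σ (μ + δ) z =
      exp ((2 * ((z : ℝ) - μ) * δ - (δ : ℝ) ^ 2) / (2 * σ ^ 2)) * dgauss σ μ z := by
  have hnorm : ∀ ν : ℤ, ∑' h : ℤ, exp (-((h : ℝ) - ν) ^ 2 / (2 * σ ^ 2)) =
      ∑' h : ℤ, exp (-(h : ℝ) ^ 2 / (2 * σ ^ 2)) :=
    tsum_comp_intCast_sub fun t => exp (-t ^ 2 / (2 * σ ^ 2))
  rw [dgauss, dgauss, hnorm, hnorm, ← mul_div_assoc, ← exp_add, ← add_div]
  push_cast
  ring_nf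

theorem dgaussProd_nonneg (σ : ℝ) (d : ℕ) (x z : Fin d → ℤ) : 0 ≤ dgaussProd σ d x z :=
  Finset.prod_nonneg fun _ _ => dgauss_nonneg σ _ _

theorem summable_dgaussProd {σ : ℝ} (hσ : σ ≠ 0) (d : ℕ) (x : Fin d → ℤ) :
    Summable (dgaussProd σ d x) :=
  summable_pi_prod (fun i => dgauss σ (x i)) (fun i => dgauss_nonneg σ (x i))
    fun i => summable_dgauss hσ (x i)

theorem dgaussProd_add (σ : ℝ) (d : ℕ) (x δ z : Fin d → ℤ) :
    dgaussProd σ d (x + δ) z =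
      exp ((2 * iprod d z δ - 2 * iprod d x δ - nsq d δ) / (2 * σ ^ 2)) * dgaussProd σ d x z := by
  simp only [dgaussProd, Pi.add_apply, dgauss_add, Finset.prod_mul_distrib, ← exp_sum,
    ← Finset.sum_div, iprod, nsq, Finset.mul_sum, ← Finset.sum_sub_distrib]
  congr 4 with i
  ring

/-- Neyman-Pearson for discrete Gaussians with different means, part 1. -/
theorem neyman_pearson_dgauss_part1 (σ : ℝ) (hσ : 0 < σ) (d : ℕ)
    (x δ : Fin d → ℤ)
    (φ : (Fin d → ℤ) → ℝ) (hφ0 : ∀ z, 0 ≤ φ z) (hφ1 : ∀ z, φ z ≤ 1)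
    (α : ℝ) (hα : 0 < α) (S : Set (Fin d → ℤ))
    (hS : S = {z | iprod d z δ ≤
      σ ^ 2 * Real.log α + (1 / 2) * (nsq d δ + 2 * iprod d x δ)})
    (h : ∑' z, φ z * dgaussProd σ d x z ≥ ∑' z : S, dgaussProd σ d x z) :
    ∑' z, φ z * dgaussProd σ d (x + δ) z ≥ ∑' z : S, dgaussProd σ d (x + δ) z := by
  set ratio := fun z => exp ((2 * iprod d z δ - 2 * iprod d x δ - nsq d δ) / (2 * σ ^ 2))
  have hmem : ∀ z, z ∈ S ↔ ratio z ≤ α := fun z => by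
    rw [hS, Set.mem_ofPred_eq, ← le_log_iff_exp_le hα, div_le_iff₀ (by positivity)]
    constructor <;> intro <;> linarith
  refine neyman_pearson_of_likelihood_ratio hα.le (summable_dgaussProd hσ.ne' d x)
    (summable_dgaussProd hσ.ne' d (x + δ)) hφ0 hφ1 (fun z hz => ?_) (fun z hz => ?_) h
  · rw [dgaussProd_add]
    exact mul_le_mul_of_nonneg_right ((hmem z).1 hz) (dgaussProd_nonneg σ d x z)
  · rw [dgaussProd_add]
    exact mul_le_mul_of_nonneg_right (not_le.1 ((hmem z).not.1 hz)).le (dgaussProd_nonneg σ d x z)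
end
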